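/- arXiv:1901.05752 — 2 statements merged into one kernel-verified Lean document; each statement's English description precedes it below -/
import Mathlib

section
/- Let the problem have Property (P). Then for every s > 0 and every t > 1 the problem is (s,t)-weakly tractable. -/
/-!
Fix `τ` as in Condition (3). Since `λ(k,1) = 1` and `h_k ≤ 1`, each
`∑_j λ(k,j)^τ = 1 + h_k^τ H(k,τ)` is at most `1 + H(1,τ)`. Counting is then a Chebyshev-type
bound: every index with `∏ λ(k,j_k) > ε²` contributes more than `ε^{2τ}` to
`∏_k ∑_j λ(k,j)^τ ≤ (1 + H(1,τ))^d`. Hence `ln n(ε,d) ≤ 2τ ln ε⁻¹ + d ln (1 + H(1,τ))`, and the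
right-hand side is `o(ε^{-s} + d^t)` because `ln x = o(x^s)` and, as `t > 1`, `d = o(d^t)`.
-/

open Filter Real Set

/-- Information complexity: the number of multi-indices `(j₁,…,j_d) ∈ ℕ^d`
(here 0-indexed, so `Λ k j` stands for `λ(k+1, j+1)`) whose eigenvalue product exceeds `ε²`. -/
noncomputable def infoCount (Λ : ℕ → ℕ → ℝ) (d : ℕ) (ε : ℝ) : ℕ :=
  Nat.card {j : Fin d → ℕ | ε ^ 2 < ∏ k : Fin d, Λ k.val (j k)}

/-- Strong polynomial tractability. -/
def IsSPT (Λ : ℕ → ℕ → ℝ) : Prop :=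
  ∃ C p : ℝ, 0 ≤ C ∧ 0 ≤ p ∧ ∀ d : ℕ, 1 ≤ d → ∀ ε : ℝ, ε ∈ Set.Ioo (0 : ℝ) 1 →
    (infoCount Λ d ε : ℝ) ≤ C * ε ^ (-p)

/-- The exponent `p*` of strong polynomial tractability. -/
noncomputable def sptExponent (Λ : ℕ → ℕ → ℝ) : ℝ :=
  sInf {p : ℝ | 0 ≤ p ∧ ∃ C : ℝ, 0 ≤ C ∧ ∀ d : ℕ, 1 ≤ d → ∀ ε : ℝ, ε ∈ Set.Ioo (0 : ℝ) 1 →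
    (infoCount Λ d ε : ℝ) ≤ C * ε ^ (-p)}

/-- Polynomial tractability. -/
def IsPT (Λ : ℕ → ℕ → ℝ) : Prop :=
  ∃ C p q : ℝ, 0 ≤ C ∧ 0 ≤ p ∧ 0 ≤ q ∧ ∀ d : ℕ, 1 ≤ d → ∀ ε : ℝ, ε ∈ Set.Ioo (0 : ℝ) 1 →
    (infoCount Λ d ε : ℝ) ≤ C * (d : ℝ) ^ q * ε ^ (-p)

/-- Quasi-polynomial tractability. -/
def IsQPT (Λ : ℕ → ℕ → ℝ) : Prop :=
  ∃ C t : ℝ, 0 < C ∧ 0 < t ∧ ∀ d : ℕ, 1 ≤ d → ∀ ε : ℝ, ε ∈ Set.Ioo (0 : ℝ) 1 →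
    (infoCount Λ d ε : ℝ) ≤ C * Real.exp (t * (1 + Real.log d) * (1 + Real.log ε⁻¹))

/-- The exponent `t*` of quasi-polynomial tractability. -/
noncomputable def qptExponent (Λ : ℕ → ℕ → ℝ) : ℝ :=
  sInf {t : ℝ | 0 < t ∧ ∃ C : ℝ, 0 < C ∧ ∀ d : ℕ, 1 ≤ d → ∀ ε : ℝ, ε ∈ Set.Ioo (0 : ℝ) 1 →
    (infoCount Λ d ε : ℝ) ≤ C * Real.exp (t * (1 + Real.log d) * (1 + Real.log ε⁻¹))}

/-- The filter describing `ε⁻¹ + d → ∞` over pairs `(ε, d)` with `ε ∈ (0,1)` and `d ≥ 1`. -/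
noncomputable def wtFilter : Filter (ℝ × ℕ) :=
  (Filter.comap (fun p : ℝ × ℕ => p.1⁻¹ + (p.2 : ℝ)) Filter.atTop) ⊓
    Filter.principal {p : ℝ × ℕ | p.1 ∈ Set.Ioo (0 : ℝ) 1 ∧ 1 ≤ p.2}

/-- `(s,t)`-weak tractability: `ln n(ε,d) / (ε^{-s} + d^t) → 0` as `ε⁻¹ + d → ∞`. -/
def IsWT (Λ : ℕ → ℕ → ℝ) (s t : ℝ) : Prop :=
  Filter.Tendsto
    (fun p : ℝ × ℕ => Real.log (infoCount Λ p.2 p.1) / (p.1 ^ (-s) + (p.2 : ℝ) ^ t))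
    wtFilter (nhds 0)

/-- Uniform weak tractability. -/
def IsUWT (Λ : ℕ → ℕ → ℝ) : Prop := ∀ s t : ℝ, 0 < s → 0 < t → IsWT Λ s t

/-- The problem suffers from the curse of dimensionality. -/
def SuffersCurse (Λ : ℕ → ℕ → ℝ) : Prop :=
  ∃ C ε₀ α : ℝ, 0 < C ∧ 0 < ε₀ ∧ 0 < α ∧ ∀ ε : ℝ, 0 < ε → ε ≤ ε₀ →
    {d : ℕ | C * (1 + α) ^ d ≤ (infoCount Λ d ε : ℝ)}.Infinite

/-- Condition (3) of Property (P) for a given `τ > 0`: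
`H(k,τ) = ∑_{j≥2} (λ(k,j)/λ(k,2))^τ` is finite for each `k` and
`sup_k H(k,τ) = H(1,τ)` (equivalently `H(k,τ) ≤ H(1,τ)` for all `k`). -/
def Cond3 (Λ : ℕ → ℕ → ℝ) (τ : ℝ) : Prop :=
  0 < τ ∧ (∀ k, Summable fun j : ℕ => (Λ k (j + 1) / Λ k 1) ^ τ) ∧
    ∀ k, (∑' j : ℕ, (Λ k (j + 1) / Λ k 1) ^ τ) ≤ ∑' j : ℕ, (Λ 0 (j + 1) / Λ 0 1) ^ τ

/-- `τ₀`: the infimum of all `τ` satisfying Condition (3). -/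
noncomputable def tau0 (Λ : ℕ → ℕ → ℝ) : ℝ := sInf {τ : ℝ | Cond3 Λ τ}

/-- Property (P): each sequence `λ(k,·)` is nonincreasing and nonnegative with `λ(k,1) = 1`
and `λ(k,2) > 0`, `h_k = λ(k,2)` is nonincreasing, and Condition (3) holds for some `τ > 0`. -/
structure PropertyP (Λ : ℕ → ℕ → ℝ) : Prop where
  nonneg : ∀ k j, 0 ≤ Λ k j
  anti : ∀ k, Antitone (Λ k)
  first : ∀ k, Λ k 0 = 1
  second_pos : ∀ k, 0 < Λ k 1
  h_anti : Antitone fun k => Λ k 1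
  cond3 : ∃ τ : ℝ, Cond3 Λ τ

open Asymptotics Topology

lemma isLittleO_id_rpow_atTop {t : ℝ} (ht : 1 < t) :
    (fun x : ℝ => x) =o[atTop] fun x => x ^ t := by
  refine (isLittleO_iff_tendsto' ?_).mpr ?_
  · filter_upwards [eventually_gt_atTop 0] with x hx h
    exact absurd h (rpow_pos_of_pos hx t).ne'
  · refine (tendsto_rpow_neg_atTop (sub_pos.2 ht)).congr' ?_
    filter_upwards [eventually_gt_atTop 0] with x hx
    rw [rpow_neg hx.le, rpow_sub hx, rpow_one, inv_div]

lemma MonotoneOn.exists_le_add_mul_of_isLittleO {f g : ℝ → ℝ} {a : ℝ}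
    (hf : MonotoneOn f (Ici a)) (hfg : f =o[atTop] g) {δ : ℝ} (hδ : 0 < δ) :
    ∃ K, ∀ x, a ≤ x → f x ≤ K + δ * ‖g x‖ := by
  obtain ⟨X, hX⟩ := eventually_atTop.mp (hfg.bound hδ)
  refine ⟨‖f (max a X)‖, fun x hx => ?_⟩
  rcases le_total x (max a X) with h | h
  · have := hf hx (le_max_left a X) h
    linarith [Real.le_norm_self (f (max a X)), mul_nonneg hδ.le (norm_nonneg (g x))]
  · have := hX x (le_of_max_le_right h)
    linarith [Real.le_norm_self (f x), norm_nonneg (f (max a X))]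

lemma tendsto_div_nhds_zero_of_forall_le_add_mul {α : Type*} {l : Filter α} {u D : α → ℝ}
    (hD : Tendsto D l atTop) (hu : ∀ᶠ x in l, 0 ≤ u x)
    (h : ∀ δ > 0, ∃ C, ∀ᶠ x in l, u x ≤ C + δ * D x) :
    Tendsto (fun x => u x / D x) l (𝓝 0) := by
  refine tendsto_order.2 ⟨fun a ha => ?_, fun a ha => ?_⟩
  · filter_upwards [hu, hD.eventually_gt_atTop 0] with x hux hDx
    exact ha.trans_le (div_nonneg hux hDx.le)
  · obtain ⟨C, hC⟩ := h (a / 2) (half_pos ha)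
    filter_upwards [hC, hD.eventually_gt_atTop 0, hD.eventually_gt_atTop (2 * C / a)]
      with x hCx hDx hCD
    rw [div_lt_iff₀ hDx]
    rw [div_lt_iff₀' ha] at hCD
    linarith

lemma rpow_min_le_rpow_add_rpow {x y s t : ℝ} (hx : 1 ≤ x) (hy : 1 ≤ y) (hs : 0 ≤ s)
    (ht : 0 ≤ t) : ((x + y) / 2) ^ min s t ≤ x ^ s + y ^ t := by
  have hxs := rpow_nonneg (by linarith : 0 ≤ x) s
  have hyt := rpow_nonneg (by linarith : 0 ≤ y) t
  rcases le_total y x with h | h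
  · calc ((x + y) / 2) ^ min s t ≤ x ^ min s t :=
          rpow_le_rpow (by linarith) (by linarith) (le_min hs ht)
      _ ≤ x ^ s := rpow_le_rpow_of_exponent_le hx (min_le_left s t)
      _ ≤ x ^ s + y ^ t := le_add_of_nonneg_right hyt
  · calc ((x + y) / 2) ^ min s t ≤ y ^ min s t :=
          rpow_le_rpow (by linarith) (by linarith) (le_min hs ht)
      _ ≤ y ^ t := rpow_le_rpow_of_exponent_le hy (min_le_right s t)
      _ ≤ x ^ s + y ^ t := le_add_of_nonneg_left hxs

lemma eventually_mem_wtFilter : ∀ᶠ p in wtFilter, p.1 ∈ Ioo (0 : ℝ) 1 ∧ 1 ≤ p.2 :=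
  le_principal_iff.mp inf_le_right

lemma tendsto_rpow_neg_add_rpow_wtFilter {s t : ℝ} (hs : 0 < s) (ht : 0 < t) :
    Tendsto (fun p : ℝ × ℕ => p.1 ^ (-s) + (p.2 : ℝ) ^ t) wtFilter atTop := by
  have hsum : Tendsto (fun p : ℝ × ℕ => p.1⁻¹ + (p.2 : ℝ)) wtFilter atTop :=
    tendsto_comap.mono_left inf_le_left
  refine tendsto_atTop_mono' _ ?_
    ((tendsto_rpow_atTop (lt_min hs ht)).comp (hsum.atTop_div_const two_pos))
  filter_upwards [eventually_mem_wtFilter] with p ⟨⟨hε0, hε1⟩, hd⟩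
  rw [rpow_neg_eq_inv_rpow]
  exact rpow_min_le_rpow_add_rpow (one_le_inv₀ hε0 |>.2 hε1.le) (by exact_mod_cast hd) hs.le ht.le

lemma card_mul_rpow_le_prod_tsum_rpow {ι β : Type*} [Fintype ι] {μ : ι → β → ℝ}
    (hμ : ∀ k j, 0 ≤ μ k j) {τ : ℝ} (hτ : 0 ≤ τ) (hsum : ∀ k, Summable fun j => μ k j ^ τ)
    {c : ℝ} (hc : 0 ≤ c) (F : Finset (ι → β)) (hF : ∀ j ∈ F, c < ∏ k, μ k (j k)) :
    F.card * c ^ τ ≤ ∏ k, ∑' j, μ k j ^ τ := by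
  classical
  have hμτ : ∀ k j, 0 ≤ μ k j ^ τ := fun k j => rpow_nonneg (hμ k j) τ
  calc (F.card : ℝ) * c ^ τ = ∑ j ∈ F, c ^ τ := by rw [Finset.sum_const, nsmul_eq_mul]
    _ ≤ ∑ j ∈ F, ∏ k, μ k (j k) ^ τ := Finset.sum_le_sum fun j hj => by
        rw [finsetProd_rpow _ _ (fun k _ => hμ k (j k))]
        exact rpow_le_rpow hc (hF j hj).le hτ
    _ ≤ ∑ j ∈ Fintype.piFinset fun k => F.image (· k), ∏ k, μ k (j k) ^ τ :=
        Finset.sum_le_sum_of_subset_of_nonneg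
          (fun j hj => Fintype.mem_piFinset.2 fun k => Finset.mem_image_of_mem _ hj)
          fun j _ _ => Finset.prod_nonneg fun k _ => hμτ k _
    _ = ∏ k, ∑ m ∈ F.image (· k), μ k m ^ τ :=
        (Finset.prod_univ_sum (fun k => F.image (· k)) fun k m => μ k m ^ τ).symm
    _ ≤ ∏ k, ∑' m, μ k m ^ τ :=
        Finset.prod_le_prod (fun k _ => Finset.sum_nonneg fun m _ => hμτ k m)
          fun k _ => (hsum k).sum_le_tsum _ fun m _ => hμτ k m

/-- No finiteness hypothesis is needed: `Nat.card` of an infinite set is `0`. -/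
lemma natCard_mul_rpow_le_prod_tsum_rpow {ι β : Type*} [Fintype ι] {μ : ι → β → ℝ}
    (hμ : ∀ k j, 0 ≤ μ k j) {τ : ℝ} (hτ : 0 ≤ τ) (hsum : ∀ k, Summable fun j => μ k j ^ τ)
    {c : ℝ} (hc : 0 ≤ c) :
    (Nat.card {j : ι → β | c < ∏ k, μ k (j k)} : ℝ) * c ^ τ ≤ ∏ k, ∑' j, μ k j ^ τ := by
  rw [Nat.card_coe_set_eq]
  by_cases hS : {j : ι → β | c < ∏ k, μ k (j k)}.Finite
  · rw [ncard_eq_toFinset_card _ hS]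
    exact card_mul_rpow_le_prod_tsum_rpow hμ hτ hsum hc _ fun j hj => hS.mem_toFinset.1 hj
  · rw [Set.Infinite.ncard hS, Nat.cast_zero, zero_mul]
    exact Finset.prod_nonneg fun k _ => tsum_nonneg fun j => rpow_nonneg (hμ k j) τ

namespace PropertyP

variable {Λ : ℕ → ℕ → ℝ}

lemma le_one (hP : PropertyP Λ) (k j : ℕ) : Λ k j ≤ 1 :=
  hP.first k ▸ hP.anti k (Nat.zero_le j)

lemma tsum_rpow_div_nonneg (hP : PropertyP Λ) (k : ℕ) (τ : ℝ) :
    0 ≤ ∑' j, (Λ k (j + 1) / Λ k 1) ^ τ :=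
  tsum_nonneg fun _ => rpow_nonneg (div_nonneg (hP.nonneg k _) (hP.second_pos k).le) τ

variable {τ : ℝ}

lemma rpow_eq_mul_rpow_div (hP : PropertyP Λ) (k j : ℕ) :
    Λ k j ^ τ = Λ k 1 ^ τ * (Λ k j / Λ k 1) ^ τ := by
  rw [div_rpow (hP.nonneg k j) (hP.second_pos k).le,
    mul_div_cancel₀ _ (rpow_pos_of_pos (hP.second_pos k) τ).ne']

lemma summable_rpow (hP : PropertyP Λ) (hτ : Cond3 Λ τ) (k : ℕ) :
    Summable fun j => Λ k j ^ τ := by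
  refine (summable_nat_add_iff 1).1 ?_
  simpa only [← hP.rpow_eq_mul_rpow_div] using (hτ.2.1 k).mul_left (Λ k 1 ^ τ)

lemma tsum_rpow_le (hP : PropertyP Λ) (hτ : Cond3 Λ τ) (k : ℕ) :
    ∑' j, Λ k j ^ τ ≤ 1 + ∑' j, (Λ 0 (j + 1) / Λ 0 1) ^ τ := by
  have hh : Λ k 1 ^ τ ≤ 1 := rpow_le_one (hP.second_pos k).le (hP.le_one k 1) hτ.1.le
  rw [(hP.summable_rpow hτ k).tsum_eq_zero_add, hP.first, one_rpow,
    tsum_congr fun j => hP.rpow_eq_mul_rpow_div k (j + 1), tsum_mul_left]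
  linarith [mul_le_of_le_one_left (hP.tsum_rpow_div_nonneg k τ) hh, hτ.2.2 k]

lemma log_infoCount_le (hP : PropertyP Λ) (hτ : Cond3 Λ τ) (d : ℕ) {ε : ℝ}
    (hε : ε ∈ Ioo (0 : ℝ) 1) :
    log (infoCount Λ d ε) ≤
      2 * τ * log ε⁻¹ + log (1 + ∑' j, (Λ 0 (j + 1) / Λ 0 1) ^ τ) * d := by
  obtain ⟨hε0, hε1⟩ := hε
  set A := 1 + ∑' j, (Λ 0 (j + 1) / Λ 0 1) ^ τ
  have hA : 1 ≤ A := le_add_of_nonneg_right (hP.tsum_rpow_div_nonneg 0 τ)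
  have hcount : (infoCount Λ d ε : ℝ) * (ε ^ 2) ^ τ ≤ A ^ d := by
    refine (natCard_mul_rpow_le_prod_tsum_rpow (fun (k : Fin d) j => hP.nonneg k j) hτ.1.le
      (fun k => hP.summable_rpow hτ k) (sq_nonneg ε)).trans ?_
    calc ∏ k : Fin d, ∑' j, Λ k j ^ τ ≤ ∏ _k : Fin d, A :=
          Finset.prod_le_prod (fun k _ => tsum_nonneg fun j => rpow_nonneg (hP.nonneg k j) τ)
            fun k _ => hP.tsum_rpow_le hτ k
      _ = A ^ d := by rw [Finset.prod_const, Finset.card_univ, Fintype.card_fin]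
  have hlogε : 0 ≤ log ε⁻¹ := log_nonneg (one_le_inv₀ hε0 |>.2 hε1.le)
  have hlogA : 0 ≤ log A := log_nonneg hA
  rcases (infoCount Λ d ε).eq_zero_or_pos with h0 | hpos
  · rw [h0, Nat.cast_zero, log_zero]
    have := hτ.1
    positivity
  · have hlog := log_le_log (by positivity) hcount
    rw [log_mul (by positivity) (by positivity), log_rpow (by positivity), log_pow, log_pow]
      at hlog
    push_cast at hlog
    rw [log_inv]
    linarith

end PropertyP

/-- Under Property (P), the problem is `(s,t)`-weakly tractable for every `s > 0`
and every `t > 1`. -/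
theorem stwt_of_propertyP (Λ : ℕ → ℕ → ℝ) (hP : PropertyP Λ) :
    ∀ s t : ℝ, 0 < s → 1 < t → IsWT Λ s t := by
  obtain ⟨τ, hτ⟩ := hP.cond3
  intro s t hs ht
  set A := 1 + ∑' j, (Λ 0 (j + 1) / Λ 0 1) ^ τ
  refine tendsto_div_nhds_zero_of_forall_le_add_mul
    (tendsto_rpow_neg_add_rpow_wtFilter hs (by linarith))
    (Eventually.of_forall fun p => log_natCast_nonneg _) fun δ hδ => ?_
  have hτ0 : 0 ≤ 2 * τ := by linarith [hτ.1]
  have hA : 0 ≤ log A := log_nonneg (le_add_of_nonneg_right (hP.tsum_rpow_div_nonneg 0 τ))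
  obtain ⟨K₁, hK₁⟩ := MonotoneOn.exists_le_add_mul_of_isLittleO
    (fun x hx y _ hxy => mul_le_mul_of_nonneg_left (log_le_log (zero_lt_one.trans_le hx) hxy) hτ0)
    ((isLittleO_log_rpow_atTop hs).const_mul_left (2 * τ)) hδ
  obtain ⟨K₂, hK₂⟩ := MonotoneOn.exists_le_add_mul_of_isLittleO
    (fun x _ y _ hxy => mul_le_mul_of_nonneg_left hxy hA)
    ((isLittleO_id_rpow_atTop ht).const_mul_left (log A)) hδ
  refine ⟨K₁ + K₂, ?_⟩
  filter_upwards [eventually_mem_wtFilter] with p ⟨hε, hd⟩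
  have hε₁ : 1 ≤ p.1⁻¹ := one_le_inv₀ hε.1 |>.2 hε.2.le
  have hd₁ : (1 : ℝ) ≤ p.2 := by exact_mod_cast hd
  calc log (infoCount Λ p.2 p.1) ≤ 2 * τ * log p.1⁻¹ + log A * p.2 :=
        hP.log_infoCount_le hτ p.2 hε
    _ ≤ (K₁ + δ * ‖p.1⁻¹ ^ s‖) + (K₂ + δ * ‖(p.2 : ℝ) ^ t‖) :=
        add_le_add (hK₁ _ hε₁) (hK₂ _ hd₁)
    _ = K₁ + K₂ + δ * (p.1 ^ (-s) + (p.2 : ℝ) ^ t) := by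
        rw [norm_of_nonneg (by positivity), norm_of_nonneg (by positivity), rpow_neg_eq_inv_rpow]
        ring
end

section
/- For the Euler-kernel approximation problem under the normalized error criterion, the problem is strongly polynomially tractable if and only if it is polynomially tractable. -/
open Filter Real Set

/-- Normalized eigenvalues of the Euler-kernel problem: `λ(k,j)/λ(k,1) = (2j-1)^{-(2r_k+2)}`
(0-indexed: `eulerLam r k j = (2(j+1)-1)^{-(2 r_{k+1} + 2)}`). -/
noncomputable def eulerLam (r : ℕ → ℕ) (k j : ℕ) : ℝ :=
  ((2 * (j : ℝ) + 1) ^ (2 * r k + 2))⁻¹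

/-!
Let `μ_k = 3^{-(2r_k+2)}` be the second-largest normalized eigenvalue of the `k`-th factor.
Weighting every counted multi-index by `∏_k λ(k,j_k)^τ / ε^{2τ} ≥ 1` gives
`n(ε,d) ≤ ε^{-2τ} ∏_k (1 + B μ_k^τ) ≤ ε^{-2τ} exp (B ∑_k μ_k^τ)`, so the problem is SPT as soon as
`∑_k μ_k^τ < ∞` for some `τ`. Conversely, if `ε² < μ_d^s`, then every multi-index with `s` of its
`d` coordinates equal to `2` and the others equal to `1` is counted (`μ_k ≥ μ_d` for `k ≤ d` since
`r` is nondecreasing), so `n(ε,d) ≥ C(d,s) ≳ d^s`. Against a PT bound `C d^q ε^{-p}` with `s > q`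
this forces `d μ_d^m = O(1)`, hence `μ_d^{2m+2} = O(d^{-2})` is summable.
-/

open Finset

theorem IsSPT.isPT {Λ : ℕ → ℕ → ℝ} (h : IsSPT Λ) : IsPT Λ := by
  obtain ⟨C, p, hC, hp, hbound⟩ := h
  exact ⟨C, p, 0, hC, hp, le_rfl, fun d hd ε hε => by simpa using hbound d hd ε hε⟩

theorem IsPT.exists_natPow {Λ : ℕ → ℕ → ℝ} (h : IsPT Λ) :
    ∃ (C : ℝ) (P Q : ℕ), ∀ d : ℕ, 1 ≤ d → ∀ ε ∈ Ioo (0 : ℝ) 1,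
      (infoCount Λ d ε : ℝ) * ε ^ P ≤ C * (d : ℝ) ^ Q := by
  obtain ⟨C, p, q, hC, -, -, hbound⟩ := h
  refine ⟨C, ⌈p⌉₊, ⌈q⌉₊, fun d hd ε hε => ?_⟩
  have hd' : (1 : ℝ) ≤ d := by exact_mod_cast hd
  have hεP : 0 < ε ^ ⌈p⌉₊ := pow_pos hε.1 _
  have hdq : (d : ℝ) ^ q ≤ (d : ℝ) ^ ⌈q⌉₊ := by
    rw [← Real.rpow_natCast]
    exact Real.rpow_le_rpow_of_exponent_le hd' (Nat.le_ceil q)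
  have hεp : ε ^ (-p) ≤ (ε ^ ⌈p⌉₊)⁻¹ := by
    rw [← Real.rpow_natCast, ← Real.rpow_neg hε.1.le]
    exact Real.rpow_le_rpow_of_exponent_ge hε.1 hε.2.le (neg_le_neg (Nat.le_ceil p))
  rw [← le_div_iff₀ hεP, div_eq_mul_inv]
  calc (infoCount Λ d ε : ℝ) ≤ C * (d : ℝ) ^ q * ε ^ (-p) := hbound d hd ε hε
    _ ≤ C * (d : ℝ) ^ ⌈q⌉₊ * (ε ^ ⌈p⌉₊)⁻¹ := by
        have := Real.rpow_nonneg hε.1.le (-p)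
        gcongr

theorem infoCount_mul_pow_le_prod_tsum {Λ : ℕ → ℕ → ℝ} (hΛ : ∀ k j, 0 ≤ Λ k j) {τ : ℕ}
    (hsum : ∀ k, Summable fun j => Λ k j ^ τ) (d : ℕ) (ε : ℝ) :
    (infoCount Λ d ε : ℝ) * ε ^ (2 * τ) ≤ ∏ k : Fin d, ∑' j, Λ k j ^ τ := by
  set S := {j : Fin d → ℕ | ε ^ 2 < ∏ k : Fin d, Λ k.val (j k)}
  by_cases hS : S.Finite
  swap
  · have : Infinite S := Set.infinite_coe_iff.2 hS
    rw [infoCount, Nat.card_eq_zero_of_infinite, Nat.cast_zero, zero_mul]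
    exact prod_nonneg fun k _ => tsum_nonneg fun j => pow_nonneg (hΛ _ _) τ
  set F := hS.toFinset
  calc (infoCount Λ d ε : ℝ) * ε ^ (2 * τ) = ∑ _j ∈ F, ε ^ (2 * τ) := by
        rw [infoCount, Nat.card_eq_card_finite_toFinset hS, sum_const, nsmul_eq_mul]
    _ ≤ ∑ j ∈ F, ∏ k : Fin d, Λ k.val (j k) ^ τ := sum_le_sum fun j hj => by
        rw [Finset.prod_pow, pow_mul]
        exact pow_le_pow_left₀ (sq_nonneg ε) (hS.mem_toFinset.1 hj).le τ
    _ ≤ ∑ j ∈ Fintype.piFinset fun k => F.image (· k), ∏ k : Fin d, Λ k.val (j k) ^ τ :=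
        sum_le_sum_of_subset_of_nonneg
          (fun j hj => Fintype.mem_piFinset.2 fun k => mem_image_of_mem _ hj)
          fun j _ _ => prod_nonneg fun k _ => pow_nonneg (hΛ _ _) τ
    _ = ∏ k : Fin d, ∑ i ∈ F.image (· k), Λ k.val i ^ τ :=
        (prod_univ_sum (fun k => F.image (· k)) fun k i => Λ k.val i ^ τ).symm
    _ ≤ ∏ k : Fin d, ∑' j, Λ k j ^ τ :=
        prod_le_prod (fun k _ => sum_nonneg fun i _ => pow_nonneg (hΛ _ _) τ)
          fun k _ => (hsum k).sum_le_tsum _ fun i _ => pow_nonneg (hΛ _ _) τ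

theorem isSPT_of_prod_tsum_le {Λ : ℕ → ℕ → ℝ} (hΛ : ∀ k j, 0 ≤ Λ k j) {τ : ℕ}
    (hsum : ∀ k, Summable fun j => Λ k j ^ τ) {M : ℝ}
    (hM : ∀ d, ∏ k : Fin d, ∑' j, Λ k j ^ τ ≤ M) : IsSPT Λ := by
  have hM0 : 0 ≤ M := zero_le_one.trans (by simpa using hM 0)
  refine ⟨M, (2 * τ : ℕ), hM0, Nat.cast_nonneg _, fun d _ ε hε => ?_⟩
  rw [Real.rpow_neg hε.1.le, Real.rpow_natCast, ← div_eq_mul_inv, le_div_iff₀ (pow_pos hε.1 _)]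
  exact (infoCount_mul_pow_le_prod_tsum hΛ hsum d ε).trans (hM d)

theorem choose_le_infoCount {Λ : ℕ → ℕ → ℝ} {d s : ℕ} {ε μ : ℝ}
    (hfin : {j : Fin d → ℕ | ε ^ 2 < ∏ k : Fin d, Λ k.val (j k)}.Finite)
    (h0 : ∀ k, Λ k 0 = 1) (hμ : 0 ≤ μ) (h1 : ∀ k < d, μ ≤ Λ k 1) (hε : ε ^ 2 < μ ^ s) :
    d.choose s ≤ infoCount Λ d ε := by
  classical
  let indicator (A : Finset (Fin d)) (k : Fin d) : ℕ := if k ∈ A then 1 else 0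
  have hprod (A : Finset (Fin d)) :
      ∏ k : Fin d, Λ k.val (indicator A k) = ∏ k ∈ A, Λ k.val 1 := by
    simp only [indicator, apply_ite (Λ _), h0]
    rw [prod_ite_mem, Finset.univ_inter]
  have hcard : (powersetCard s (univ : Finset (Fin d))).card = d.choose s := by simp
  rw [infoCount, Nat.card_eq_card_finite_toFinset hfin, ← hcard]
  refine card_le_card_of_injOn indicator (fun A hA => ?_) fun A _ B _ hAB => ?_
  · obtain ⟨-, hcard⟩ := mem_powersetCard.1 hA
    rw [Finset.mem_coe, Set.Finite.mem_toFinset, Set.mem_ofPred_eq, hprod]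
    calc ε ^ 2 < μ ^ s := hε
      _ = ∏ _k ∈ A, μ := by rw [prod_const, hcard]
      _ ≤ ∏ k ∈ A, Λ k.val 1 := prod_le_prod (fun _ _ => hμ) fun k _ => h1 k k.isLt
  · ext k
    have hk := congrFun hAB k
    simp only [indicator] at hk
    split_ifs at hk <;> simp_all

theorem pow_le_two_pow_mul_factorial_mul_choose {n s : ℕ} (h : 2 * s ≤ n) :
    n ^ s ≤ 2 ^ s * s.factorial * n.choose s :=
  calc n ^ s ≤ (2 * (n + 1 - s)) ^ s := Nat.pow_le_pow_left (by omega) s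
    _ = 2 ^ s * (n + 1 - s) ^ s := mul_pow _ _ _
    _ ≤ 2 ^ s * n.descFactorial s := Nat.mul_le_mul_left _ (Nat.pow_sub_le_descFactorial n s)
    _ = 2 ^ s * s.factorial * n.choose s := by
        rw [Nat.descFactorial_eq_factorial_mul_choose, mul_assoc]

theorem summable_inv_succ_sq : Summable fun j : ℕ => (((j : ℝ) + 1) ^ 2)⁻¹ := by
  simpa using (summable_nat_add_iff 1).2 (Real.summable_nat_pow_inv.2 one_lt_two)

section eulerLam

variable (r : ℕ → ℕ)

theorem eulerLam_pos (k j : ℕ) : 0 < eulerLam r k j := by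
  unfold eulerLam
  positivity

theorem eulerLam_zero_right (k : ℕ) : eulerLam r k 0 = 1 := by
  simp [eulerLam]

theorem eulerLam_le_inv_succ (k j : ℕ) : eulerLam r k j ≤ ((j : ℝ) + 1)⁻¹ := by
  have hj : (0 : ℝ) ≤ j := Nat.cast_nonneg j
  refine inv_anti₀ (by positivity) ?_
  calc (j : ℝ) + 1 ≤ 2 * j + 1 := by linarith
    _ ≤ (2 * j + 1) ^ (2 * r k + 2) := le_self_pow₀ (by linarith) (by omega)

theorem eulerLam_le_one (k j : ℕ) : eulerLam r k j ≤ 1 :=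
  (eulerLam_le_inv_succ r k j).trans (inv_le_one_of_one_le₀ (by simp))

theorem finite_setOf_lt_prod_eulerLam (d : ℕ) {ε : ℝ} (hε : 0 < ε) :
    {j : Fin d → ℕ | ε ^ 2 < ∏ k : Fin d, eulerLam r k.val (j k)}.Finite := by
  refine (Set.finite_Iic fun _ => ⌊(ε ^ 2)⁻¹⌋₊).subset fun j hj k => Nat.le_floor ?_
  have hprod_le : ∏ i : Fin d, eulerLam r i.val (j i) ≤ eulerLam r k.val (j k) := by
    simpa using prod_le_prod_of_subset_of_le_one (subset_univ {k})
      (fun i _ => (eulerLam_pos r _ _).le) fun i _ _ => eulerLam_le_one r _ _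
  have hlt : ε ^ 2 < ((j k : ℝ) + 1)⁻¹ := hj.trans_le (hprod_le.trans (eulerLam_le_inv_succ r _ _))
  have := (lt_inv_comm₀ (by positivity) (by positivity)).1 hlt
  linarith

theorem eulerLam_pow_succ_le (k j : ℕ) {τ : ℕ} (hτ : 1 ≤ τ) :
    eulerLam r k (j + 1) ^ τ ≤ eulerLam r k 1 ^ τ * (9 * (((j : ℝ) + 1) ^ 2)⁻¹) := by
  have hj : (0 : ℝ) ≤ j := Nat.cast_nonneg j
  set N := (2 * r k + 2) * τ with hN
  set x : ℝ := 2 * j + 3 with hxdef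
  have hx : 0 < x := by positivity
  have hpow (i : ℕ) : eulerLam r k i ^ τ = ((2 * (i : ℝ) + 1) ^ N)⁻¹ := by
    rw [eulerLam, inv_pow, ← pow_mul]
  have hratio : (3 / x) ^ N ≤ (3 / x) ^ 2 :=
    pow_le_pow_of_le_one (by positivity) ((div_le_one hx).2 (by linarith))
      (hN ▸ le_trans (by omega) (Nat.mul_le_mul_left _ hτ))
  have hsq : (3 / x) ^ 2 ≤ 9 * (((j : ℝ) + 1) ^ 2)⁻¹ := by
    rw [div_pow, div_eq_mul_inv]
    norm_num
    gcongr
    linarith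
  calc eulerLam r k (j + 1) ^ τ = ((3 : ℝ) ^ N)⁻¹ * (3 / x) ^ N := by
        rw [hpow, div_pow]
        push_cast
        field_simp
        ring
    _ ≤ eulerLam r k 1 ^ τ * (9 * (((j : ℝ) + 1) ^ 2)⁻¹) := by
        rw [hpow 1, Nat.cast_one, mul_one, show (2 : ℝ) + 1 = 3 by norm_num]
        exact mul_le_mul_of_nonneg_left (hratio.trans hsq) (by positivity)

theorem summable_eulerLam_pow (k : ℕ) {τ : ℕ} (hτ : 1 ≤ τ) :
    Summable fun j => eulerLam r k j ^ τ :=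
  (summable_nat_add_iff 1).1 <| (summable_inv_succ_sq.mul_left 9 |>.mul_left _).of_nonneg_of_le
    (fun _ => pow_nonneg (eulerLam_pos r k _).le τ) fun j => eulerLam_pow_succ_le r k j hτ

theorem tsum_eulerLam_pow_le (k : ℕ) {τ : ℕ} (hτ : 1 ≤ τ) :
    ∑' j, eulerLam r k j ^ τ ≤
      1 + (∑' j : ℕ, 9 * (((j : ℝ) + 1) ^ 2)⁻¹) * eulerLam r k 1 ^ τ := by
  rw [(summable_eulerLam_pow r k hτ).tsum_eq_zero_add, eulerLam_zero_right, one_pow, mul_comm,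
    ← tsum_mul_left]
  gcongr 1 + ?_
  exact ((summable_nat_add_iff 1).2 (summable_eulerLam_pow r k hτ)).tsum_le_tsum
    (fun j => eulerLam_pow_succ_le r k j hτ) ((summable_inv_succ_sq.mul_left 9).mul_left _)

variable {r}

theorem eulerLam_antitone_left (hr : Monotone r) (j : ℕ) :
    Antitone fun k => eulerLam r k j := fun k l hkl =>
  inv_anti₀ (by positivity) (pow_le_pow_right₀ (by simp) (by have := hr hkl; omega))

theorem isSPT_eulerLam_of_summable {τ : ℕ} (hτ : 1 ≤ τ)
    (h : Summable fun k => eulerLam r k 1 ^ τ) : IsSPT (eulerLam r) := by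
  set B := ∑' j : ℕ, 9 * (((j : ℝ) + 1) ^ 2)⁻¹
  have hB : 0 ≤ B := tsum_nonneg fun j => by positivity
  have ha (k : ℕ) : 0 ≤ eulerLam r k 1 ^ τ := pow_nonneg (eulerLam_pos r k 1).le τ
  refine isSPT_of_prod_tsum_le (fun k j => (eulerLam_pos r k j).le)
    (fun k => summable_eulerLam_pow r k hτ) (M := Real.exp (B * ∑' k, eulerLam r k 1 ^ τ))
    fun d => ?_
  calc ∏ k : Fin d, ∑' j, eulerLam r k j ^ τ ≤ ∏ k : Fin d, (1 + B * eulerLam r k 1 ^ τ) :=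
        prod_le_prod (fun k _ => tsum_nonneg fun j => pow_nonneg (eulerLam_pos r k j).le τ)
          fun k _ => tsum_eulerLam_pow_le r k hτ
    _ ≤ Real.exp (∑ k : Fin d, B * eulerLam r k 1 ^ τ) :=
        Real.prod_one_add_le_exp_sum _ fun k => mul_nonneg hB (ha k)
    _ ≤ Real.exp (B * ∑' k, eulerLam r k 1 ^ τ) := by
        rw [Real.exp_le_exp, ← mul_sum, Fin.sum_univ_eq_sum_range (fun k => eulerLam r k 1 ^ τ)]
        exact mul_le_mul_of_nonneg_left (h.sum_le_tsum _ fun k _ => ha k) hB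

theorem eventually_mul_eulerLam_pow_le_of_isPT (hr : Monotone r)
    (h : IsPT (eulerLam r)) :
    ∃ (K : ℝ) (m : ℕ), ∀ᶠ k : ℕ in atTop, ((k : ℝ) + 1) * eulerLam r k 1 ^ m ≤ K := by
  obtain ⟨C, P, Q, hPT⟩ := h.exists_natPow
  set s := Q + 1
  refine ⟨2 ^ (s + P) * s.factorial * C, s * P, ?_⟩
  filter_upwards [eventually_ge_atTop (2 * s)] with k hk
  set μ := eulerLam r k 1
  have hμ0 : 0 < μ := eulerLam_pos r k 1
  have hμs : μ ^ s ≤ 1 := pow_le_one₀ hμ0.le (eulerLam_le_one r k 1)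
  set ε := μ ^ s / 2 with hεdef
  have hε : ε ∈ Ioo (0 : ℝ) 1 := ⟨by positivity, by linarith⟩
  have hε2 : ε ^ 2 < μ ^ s := by
    have : (μ ^ s) ^ 2 ≤ μ ^ s := pow_le_of_le_one (by positivity) hμs two_ne_zero
    nlinarith [pow_pos hμ0 s]
  have hchoose : ((k + 1).choose s : ℝ) ≤ infoCount (eulerLam r) (k + 1) ε := by
    exact_mod_cast choose_le_infoCount (finite_setOf_lt_prod_eulerLam r _ hε.1)
      (eulerLam_zero_right r) hμ0.le (fun i hi => eulerLam_antitone_left hr 1 (by omega)) hε2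
  have hpow : ((k : ℝ) + 1) ^ s ≤ 2 ^ s * s.factorial * (k + 1).choose s := by
    exact_mod_cast pow_le_two_pow_mul_factorial_mul_choose (n := k + 1) (by omega)
  rw [← mul_le_mul_iff_of_pos_right (by positivity : 0 < ((k : ℝ) + 1) ^ Q)]
  calc ((k : ℝ) + 1) * μ ^ (s * P) * (k + 1) ^ Q = (k + 1) ^ s * μ ^ (s * P) := by ring
    _ ≤ 2 ^ s * s.factorial * (k + 1).choose s * μ ^ (s * P) := by gcongr
    _ = 2 ^ s * s.factorial * 2 ^ P * ((k + 1).choose s * ε ^ P) := by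
        simp only [ε]
        rw [div_pow, ← pow_mul]
        field_simp
    _ ≤ 2 ^ s * s.factorial * 2 ^ P * (infoCount (eulerLam r) (k + 1) ε * ε ^ P) := by
        gcongr
    _ ≤ 2 ^ s * s.factorial * 2 ^ P * (C * ((k + 1 : ℕ) : ℝ) ^ Q) :=
        mul_le_mul_of_nonneg_left (hPT (k + 1) (by omega) ε hε) (by positivity)
    _ = 2 ^ (s + P) * s.factorial * C * ((k : ℝ) + 1) ^ Q := by
        push_cast
        ring

theorem exists_summable_eulerLam_pow_of_isPT (hr : Monotone r)
    (h : IsPT (eulerLam r)) : ∃ τ : ℕ, 1 ≤ τ ∧ Summable fun k => eulerLam r k 1 ^ τ := by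
  obtain ⟨K, m, hK⟩ := eventually_mul_eulerLam_pow_le_of_isPT hr h
  refine ⟨2 * m + 2, by omega,
    (summable_inv_succ_sq.mul_left (K ^ 2)).of_norm_bounded_eventually_nat ?_⟩
  filter_upwards [hK] with k hk
  have hμ0 := (eulerLam_pos r k 1).le
  rw [Real.norm_of_nonneg (pow_nonneg hμ0 _)]
  calc eulerLam r k 1 ^ (2 * m + 2) ≤ (eulerLam r k 1 ^ m) ^ 2 := by
        rw [← pow_mul]
        exact pow_le_pow_of_le_one hμ0 (eulerLam_le_one r k 1) (by omega)
    _ ≤ (K / (k + 1)) ^ 2 := by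
        gcongr
        rw [le_div_iff₀ (by positivity)]
        linarith
    _ = K ^ 2 * (((k : ℝ) + 1) ^ 2)⁻¹ := by rw [div_pow, div_eq_mul_inv]

end eulerLam

/-- Euler kernels, normalized error criterion: SPT iff PT. -/
theorem euler_spt_iff_pt (r : ℕ → ℕ) (hr : Monotone r) :
    IsSPT (eulerLam r) ↔ IsPT (eulerLam r) := by
  refine ⟨IsSPT.isPT, fun h => ?_⟩
  obtain ⟨τ, hτ, hsum⟩ := exists_summable_eulerLam_pow_of_isPT hr h
  exact isSPT_eulerLam_of_summable hτ hsum
end
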